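/- arXiv:1706.06470 — 4 statements merged into one kernel-verified Lean document; each statement's English description precedes it below -/
import Mathlib

section
/- If L is a regular language over a finite alphabet, then its generating function f(z) = Σ_{w ∈ L} z^{len(w)} (counting words by length) is a rational function; in particular, the sequence n ↦ #{w ∈ L : len(w) = n} satisfies a linear recurrence with constant coefficients. -/
/-!
A DFA for `L` with state set `σ` turns word counting into linear algebra: the number of words of
length `n` accepted from state `s` is the `s`-entry of `Tⁿ 1_F`, where `T v s = ∑ₐ v (δ s a)` and
`1_F` is the indicator of the accepting states. By Cayley–Hamilton the counts therefore satisfy the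
linear recurrence whose characteristic polynomial is that of `T`, of order `|σ|`; multiplying the
generating function by the reversed characteristic polynomial kills every coefficient of degree
at least `|σ|`, leaving a polynomial.
-/

open Polynomial

namespace Language

variable {α : Type*} (L : Language α)

noncomputable def wordCount (n : ℕ) : ℕ := Nat.card {w : List α // w ∈ L ∧ w.length = n}

instance [Finite α] (n : ℕ) : Finite {w : List α // w ∈ L ∧ w.length = n} :=
  ((List.finite_length_eq α n).subset fun _ hw => hw.2).to_subtype

variable {L} in
theorem wordCount_zero_of_nil_mem (h : [] ∈ L) : L.wordCount 0 = 1 :=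
  Nat.card_eq_one_iff_exists.mpr
    ⟨⟨[], h, rfl⟩, fun w => Subtype.ext (List.eq_nil_of_length_eq_zero w.2.2)⟩

variable {L} in
theorem wordCount_zero_of_nil_notMem (h : [] ∉ L) : L.wordCount 0 = 0 :=
  Nat.card_eq_zero.mpr <| Or.inl ⟨fun w => h (List.eq_nil_of_length_eq_zero w.2.2 ▸ w.2.1)⟩

def sigmaLeftQuotientEquiv (n : ℕ) :
    (Σ a : α, {w // w ∈ L.leftQuotient [a] ∧ w.length = n}) ≃
      {w // w ∈ L ∧ w.length = n + 1} where
  toFun x := ⟨x.1 :: x.2.1, x.2.2.1, by simp [x.2.2.2]⟩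
  invFun
    | ⟨a :: w, h⟩ => ⟨a, w, h.1, by simpa using h.2⟩
    | ⟨[], h⟩ => absurd h.2 (by simp)
  left_inv := fun ⟨_, _, _⟩ => rfl
  right_inv
    | ⟨_ :: _, _⟩ => rfl
    | ⟨[], h⟩ => absurd h.2 (by simp)

theorem wordCount_succ [Fintype α] (n : ℕ) :
    L.wordCount (n + 1) = ∑ a, (L.leftQuotient [a]).wordCount n := by
  rw [wordCount, ← Nat.card_congr (L.sigmaLeftQuotientEquiv n), Nat.card_sigma]
  rfl

end Language

namespace LinearRecurrence

variable {R : Type*} [CommRing R]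

/-- For monic `p`, `(ofCharPoly p).charPoly = p`. -/
def ofCharPoly (p : R[X]) : LinearRecurrence R := ⟨p.natDegree, fun i => -p.coeff i⟩

theorem isSolution_ofCharPoly_apply_pow {A : Type*} [Ring A] [Algebra R A] {p : R[X]}
    (hp : p.Monic) {a : A} (ha : aeval a p = 0) (f : A →ₗ[R] R) :
    (ofCharPoly p).IsSolution fun n => f (a ^ n) := by
  have hpow : a ^ p.natDegree = ∑ i ∈ Finset.range p.natDegree, -p.coeff i • a ^ i := by
    rw [hp.as_sum] at ha
    simpa [map_sum, Algebra.smul_def, add_eq_zero_iff_eq_neg] using ha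
  intro n
  calc f (a ^ (n + p.natDegree))
      = ∑ i ∈ Finset.range p.natDegree, -p.coeff i * f (a ^ (n + i)) := by
        simp only [pow_add, hpow, Finset.mul_sum, mul_smul_comm, map_sum, map_smul, smul_eq_mul]
    _ = _ := (Fin.sum_univ_eq_sum_range (fun i => -p.coeff i * f (a ^ (n + i))) _).symm

variable (E : LinearRecurrence R)

/-- `X ^ E.order * E.charPoly (1 / X)`, the reverse of `E.charPoly`. -/
noncomputable def charPolyReverse : R[X] :=
  1 - ∑ i : Fin E.order, C (E.coeffs i) * X ^ (E.order - i)

theorem coeff_zero_charPolyReverse : E.charPolyReverse.coeff 0 = 1 := by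
  have (i : Fin E.order) : ¬0 = E.order - i := by omega
  simp [charPolyReverse, coeff_X_pow, this]

theorem coeff_charPolyReverse_mul_mk {u : ℕ → R} (hu : E.IsSolution u) (n : ℕ) :
    PowerSeries.coeff (n + E.order) ((E.charPolyReverse : PowerSeries R) * PowerSeries.mk u) =
      0 := by
  have hcoe : (E.charPolyReverse : PowerSeries R) =
      1 - ∑ i : Fin E.order, PowerSeries.C (E.coeffs i) * PowerSeries.X ^ (E.order - i) := by
    rw [charPolyReverse, ← coeToPowerSeries.ringHom_apply, map_sub, map_one, map_sum]
    simp [coeToPowerSeries.ringHom_apply]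
  have hshift (i : Fin E.order) :
      PowerSeries.coeff (n + E.order) (PowerSeries.X ^ (E.order - i) * PowerSeries.mk u) =
        u (n + i) := by
    rw [show n + E.order = n + i + (E.order - i) by omega, PowerSeries.coeff_X_pow_mul,
      PowerSeries.coeff_mk]
  simp [hcoe, sub_mul, Finset.sum_mul, mul_assoc, hshift, hu n]

theorem charPolyReverse_mul_mk_eq_trunc {u : ℕ → R} (hu : E.IsSolution u) :
    (E.charPolyReverse : PowerSeries R) * PowerSeries.mk u =
      PowerSeries.trunc E.order ((E.charPolyReverse : PowerSeries R) * PowerSeries.mk u) := by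
  ext m
  rw [Polynomial.coeff_coe, PowerSeries.coeff_trunc]
  split_ifs with hm
  · rfl
  · obtain ⟨n, rfl⟩ := Nat.exists_eq_add_of_le (not_lt.mp hm)
    rw [add_comm, E.coeff_charPolyReverse_mul_mk hu]

end LinearRecurrence

namespace DFA

variable {α σ : Type*} (M : DFA α σ)

theorem leftQuotient_acceptsFrom (s : σ) (a : α) :
    (M.acceptsFrom s).leftQuotient [a] = M.acceptsFrom (M.step s a) := rfl

variable [Fintype α] (R : Type*)

def transferOperator [Semiring R] : Module.End R (σ → R) where
  toFun v s := ∑ a, v (M.step s a)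
  map_add' v w := by ext; simp [Finset.sum_add_distrib]
  map_smul' r v := by ext; simp [Finset.mul_sum]

theorem transferOperator_apply [Semiring R] (v : σ → R) (s : σ) :
    M.transferOperator R v s = ∑ a, v (M.step s a) := rfl

theorem transferOperator_pow_apply_indicator_accept [Semiring R] (n : ℕ) (s : σ) :
    (M.transferOperator R ^ n) (M.accept.indicator 1) s = (M.acceptsFrom s).wordCount n := by
  induction n generalizing s with
  | zero =>
    by_cases h : s ∈ M.accept
    · simp [h, Language.wordCount_zero_of_nil_mem (L := M.acceptsFrom s) h]
    · simp [h, Language.wordCount_zero_of_nil_notMem (L := M.acceptsFrom s) h]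
  | succ n ih =>
    simp [pow_succ', transferOperator_apply, ih, Language.wordCount_succ, leftQuotient_acceptsFrom]

theorem isSolution_wordCount_acceptsFrom [CommRing R] [Fintype σ] (s : σ) :
    (LinearRecurrence.ofCharPoly (M.transferOperator R).charpoly).IsSolution
      fun n => ((M.acceptsFrom s).wordCount n : R) := by
  simpa only [LinearMap.comp_apply, LinearMap.applyₗ_apply_apply, LinearMap.proj_apply,
      transferOperator_pow_apply_indicator_accept] using
    LinearRecurrence.isSolution_ofCharPoly_apply_pow (M.transferOperator R).charpoly_monic
      (M.transferOperator R).aeval_self_charpoly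
      (LinearMap.proj s ∘ₗ LinearMap.applyₗ (M.accept.indicator 1))

end DFA

open PowerSeries in
theorem regular_generating_function_rational {S : Type*} [Fintype S]
    (L : Language S) (hL : L.IsRegular)
    (count : ℕ → ℕ)
    (hcount : ∀ n, count n = Nat.card {w : List S // w ∈ L ∧ w.length = n}) :
    (∃ p q : Polynomial ℚ, q.coeff 0 ≠ 0 ∧
        (q : PowerSeries ℚ) * PowerSeries.mk (fun n => (count n : ℚ)) =
          (p : PowerSeries ℚ)) ∧
      ∃ (d : ℕ), 1 ≤ d ∧ ∃ c : Fin d → ℚ, ∃ N : ℕ,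
        ∀ n ≥ N, (count (n + d) : ℚ) = ∑ i : Fin d, c i * count (n + i) := by
  obtain ⟨σ, _, M, rfl⟩ := hL
  have : Nonempty σ := ⟨M.start⟩
  set E := LinearRecurrence.ofCharPoly (M.transferOperator ℚ).charpoly
  have hsol : E.IsSolution fun n => (count n : ℚ) := by
    simp only [hcount]
    exact M.isSolution_wordCount_acceptsFrom ℚ M.start
  have hd : 1 ≤ E.order := by
    simp [E, LinearRecurrence.ofCharPoly, LinearMap.charpoly_natDegree, Nat.one_le_iff_ne_zero]
  exact ⟨⟨_, _, by simp [E.coeff_zero_charPolyReverse], E.charPolyReverse_mul_mk_eq_trunc hsol⟩,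
    E.order, hd, E.coeffs, 0, fun n _ => hsol n⟩
end

section
/- Let K be an infinite field. For every d ≥ 1 there exists an eventually periodic sequence h : ℕ → ℕ taking values in {8, 9} (shifted by three: values of a Hilbert function h_A(n+3)) whose minimal initial non-periodic segment has length exactly d; concretely, for α ∈ K× of multiplicative order ω not dividing ρ = d − 4 (choosing ω > ρ), the sequence c_n = 1 if (n = ρ or ω ∣ n) and c_n = 0 otherwise is eventually periodic with minimal preperiod exactly ρ + 1. -/
def markedMultiples {α : Type*} (ρ ω : ℕ) (a b : α) (n : ℕ) : α :=
  if n = ρ ∨ ω ∣ n then a else b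

section MarkedMultiples

variable {α : Type*} {ρ ω : ℕ} {a b : α}

theorem markedMultiples_add_period {n : ℕ} (hn : ρ < n) :
    markedMultiples ρ ω a b (n + ω) = markedMultiples ρ ω a b n := by
  have hnρ : n ≠ ρ := hn.ne'
  have hnωρ : n + ω ≠ ρ := by omega
  simp only [markedMultiples, hnρ, hnωρ, false_or, Nat.dvd_add_self_right]

theorem markedMultiples_add_period_ne (hω : ω ≠ 0) (hdvd : ¬ ω ∣ ρ) (hab : a ≠ b) :
    markedMultiples ρ ω a b (ρ + ω) ≠ markedMultiples ρ ω a b ρ := by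
  have hρω : ρ + ω ≠ ρ := by omega
  simpa only [markedMultiples, hρω, Nat.dvd_add_self_right, hdvd, or_self, if_false,
    true_or, if_true] using hab.symm

end MarkedMultiples

theorem preperiod_exactly_general (ρ ω : ℕ) (hω : ρ < ω)
    (hdvd : ¬ ω ∣ ρ) (c : ℕ → ℕ)
    (hc : ∀ n, c n = if n = ρ ∨ ω ∣ n then 1 else 0) :
    (∀ n, ρ + 1 ≤ n → c (n + ω) = c n) ∧
      ∀ N : ℕ, (∀ n, N ≤ n → c (n + ω) = c n) → ρ + 1 ≤ N := by
  obtain rfl : c = markedMultiples ρ ω 1 0 := funext hc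
  refine ⟨fun n hn => markedMultiples_add_period hn, fun N hN => ?_⟩
  by_contra! hNρ
  exact markedMultiples_add_period_ne (by omega) hdvd one_ne_zero (hN ρ (by omega))

/-- The sequence `c_n = 1` iff `n = ρ` or `ω ∣ n` (with `ω > ρ ≥ 1`) is
eventually periodic with period `ω` and minimal preperiod exactly `ρ + 1`. -/
theorem preperiod_exactly (ρ ω : ℕ) (hρ : 1 ≤ ρ) (hω : ρ < ω)
    (hdvd : ¬ ω ∣ ρ) (c : ℕ → ℕ)
    (hc : ∀ n, c n = if n = ρ ∨ ω ∣ n then 1 else 0) :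
    (∀ n, ρ + 1 ≤ n → c (n + ω) = c n) ∧
      ∀ N : ℕ, (∀ n, N ≤ n → c (n + ω) = c n) → ρ + 1 ≤ N :=
  preperiod_exactly_general ρ ω hω hdvd c hc
end

section
/- Let p be a prime and m ≥ 1. The set {p^m : m ∈ ℕ} is not the union of a finite set and finitely many arithmetic progressions {α + tβ | t ∈ ℕ} with β ≥ 1. -/
theorem powers_of_prime_not_SML (p : ℕ) (hp : p.Prime) :
    ¬ ∃ (F : Finset ℕ) (k : ℕ) (α β : Fin k → ℕ), (∀ i, 1 ≤ β i) ∧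
        {n : ℕ | ∃ m : ℕ, n = p ^ m} =
          (↑F : Set ℕ) ∪ ⋃ i : Fin k, {m : ℕ | ∃ t : ℕ, m = α i + t * β i} := by
  rintro ⟨F, k, α, β, hβ, hS⟩
  have hp1 : 1 < p := hp.one_lt
  rcases Nat.eq_zero_or_pos k with hk | hk
  · subst hk
    have hinf : {n : ℕ | ∃ m : ℕ, n = p ^ m}.Infinite := by
      have hr : Set.range (fun m : ℕ => p ^ m) = {n : ℕ | ∃ m, n = p ^ m} := by
        ext n; simp [eq_comm]
      rw [← hr]
      exact Set.infinite_range_of_injective (Nat.pow_right_injective hp.two_le)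
    apply hinf
    rw [hS]
    have : (⋃ i : Fin 0, {m : ℕ | ∃ t : ℕ, m = α i + t * β i}) = ∅ := by
      simp
    rw [this]
    simp
  · set i : Fin k := ⟨0, hk⟩
    have hAP : ∀ t : ℕ, ∃ m, α i + t * β i = p ^ m := by
      intro t
      have : α i + t * β i ∈ {n : ℕ | ∃ m, n = p ^ m} := by
        rw [hS]; right; exact Set.mem_iUnion.2 ⟨i, ⟨t, rfl⟩⟩
      obtain ⟨m, hm⟩ := this
      exact ⟨m, hm⟩
    have hβi := hβ i
    obtain ⟨m, hm⟩ := hAP (β i + 1)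
    obtain ⟨m', hm'⟩ := hAP (β i + 2)
    have hlt : β i < p ^ m := by nlinarith
    have h1 : p ^ m < p ^ m' := by nlinarith
    have h2 : p ^ m' < p ^ (m + 1) := by
      have : p ^ (m + 1) = p ^ m * p := pow_succ p m
      nlinarith
    have hm1 : m < m' := (Nat.pow_lt_pow_iff_right hp1).mp h1
    have hm2 : m' < m + 1 := (Nat.pow_lt_pow_iff_right hp1).mp h2
    omega
end

section
/- Let K be a field of positive characteristic p that is not algebraic over F_p. Then there exists x ∈ K transcendental over F_p, and for such x the sequence a_n = (x+1)^n − x^n − 1 in K satisfies a linear recurrence of order 3 with coefficients in K but its zero set { n | a_n = 0 } is infinite and contains no infinite arithmetic progression. -/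
open Polynomial

lemma lech_aux_key {K : Type*} [Field K] (p : ℕ) [Fact p.Prime] [CharP K p]
    [Algebra (ZMod p) K]
    (y : K) (hy : Transcendental (ZMod p) y) (m : ℕ) (hm : 2 ≤ m) (hpm : ¬ p ∣ m) :
    (y + 1) ^ m - y ^ m - 1 ≠ 0 := by
  intro h
  apply hy
  refine ⟨(X + 1) ^ m - X ^ m - 1, ?_, ?_⟩
  · intro h0
    have := congrArg (fun q => Polynomial.coeff q 1) h0
    simp [coeff_X_add_one_pow, Polynomial.coeff_X_pow, (by omega : 1 ≠ m),
      Polynomial.coeff_one] at this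
    rw [if_neg (by omega), sub_zero] at this
    exact hpm ((ZMod.natCast_eq_zero_iff m p).mp this)
  · simp [h]

theorem lech_in_transcendental_positive_char {K : Type*} [Field K]
    (p : ℕ) [Fact p.Prime] [CharP K p] [Algebra (ZMod p) K]
    (hK : ¬ Algebra.IsAlgebraic (ZMod p) K) :
    (∃ x : K, Transcendental (ZMod p) x) ∧
      ∀ x : K, Transcendental (ZMod p) x →
        ∀ a : ℕ → K, (∀ n, a n = (x + 1) ^ n - x ^ n - 1) →
          (∃ s₁ s₂ s₃ : K,
              ∀ n, a (n + 3) = s₁ * a (n + 2) - s₂ * a (n + 1) + s₃ * a n) ∧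
            {n : ℕ | a n = 0}.Infinite ∧
            ¬ ∃ α β : ℕ, 1 ≤ β ∧
                {m : ℕ | ∃ t : ℕ, m = α + t * β} ⊆ {n : ℕ | a n = 0} := by
  have hp : p.Prime := Fact.out
  constructor
  · by_contra hx
    push_neg at hx
    exact hK ⟨fun x => not_not.mp (hx x)⟩
  · intro x hx a ha
    refine ⟨⟨2 * x + 2, x ^ 2 + 3 * x + 1, (x + 1) * x, fun n => ?_⟩, ?_, ?_⟩
    · simp only [ha, pow_succ]
      ring
    · -- powers of p are zeros
      apply Set.infinite_of_injective_forall_mem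
        (f := fun m : ℕ => p ^ m)
        (fun i j h => Nat.pow_right_injective hp.two_le h)
      · intro m
        show a (p ^ m) = 0
        rw [ha, add_pow_char_pow]
        simp
    · rintro ⟨α, β, hβ, hAP⟩
      -- pick two consecutive AP terms > β; not both powers of p
      set n₁ := α + (β + 1) * β with hn₁
      set n₂ := α + (β + 2) * β with hn₂
      have hq : β + 1 ≤ (β + 1) * β := Nat.le_mul_of_pos_right _ hβ
      have hgt : β < n₁ := by omega
      have hrr : (β + 2) * β = (β + 1) * β + β := by ring
      have hstep : n₂ = n₁ + β := by omega
      have key : ∀ n : ℕ, 2 ≤ n → a n = 0 → ∃ e : ℕ, n = p ^ e := by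
        intro n hn h0
        by_contra hpow
        push_neg at hpow
        have hn0 : n ≠ 0 := by omega
        obtain ⟨e, m, hpm, hmul⟩ : ∃ e m, ¬ p ∣ m ∧ p ^ e * m = n :=
          ⟨n.factorization p, n / p ^ n.factorization p,
            Nat.not_dvd_ordCompl hp hn0, Nat.ordProj_mul_ordCompl_eq_self n p⟩
        have hm2 : 2 ≤ m := by
          by_contra h
          push_neg at h
          interval_cases m
          · omega
          · exact hpow e (by omega)
        -- a n = (y+1)^m - y^m - 1 with y = x^(p^e)
        have hy : Transcendental (ZMod p) (x ^ p ^ e) :=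
          hx.pow (pow_pos hp.pos e)
        apply lech_aux_key p (x ^ p ^ e) hy m hm2 hpm
        have : (x + 1) ^ n = (x ^ p ^ e + 1) ^ m := by
          rw [← hmul, pow_mul, add_pow_char_pow, one_pow]
        rw [ha] at h0
        rw [← this, ← pow_mul, hmul]
        exact h0
      have h1 : a n₁ = 0 := hAP ⟨β + 1, rfl⟩
      have h2 : a n₂ = 0 := hAP ⟨β + 2, rfl⟩
      obtain ⟨e₁, he₁⟩ := key n₁ (by omega) h1
      obtain ⟨e₂, he₂⟩ := key n₂ (by omega) h2
      have hlt : p ^ e₁ < p ^ e₂ := by omega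
      have hee : e₁ < e₂ := (Nat.pow_lt_pow_iff_right hp.one_lt).mp hlt
      have h3 : p ^ e₁ * p ≤ p ^ e₂ := by
        calc p ^ e₁ * p = p ^ (e₁ + 1) := by ring
        _ ≤ p ^ e₂ := Nat.pow_le_pow_right hp.pos hee
      have h4 : p ^ e₁ * 2 ≤ p ^ e₁ * p := Nat.mul_le_mul_left _ hp.two_le
      omega
end
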